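/- Let f : Fin n → ℝ[x₁,…,xₙ] be a polynomial vector field, p ∈ ℝ[x₁,…,xₙ], and let x : ℝ → ℝⁿ be a trajectory of the system ẋ = f(x) with initial point x(0) = x₀. If x₀ lies in the transverse set Trans_{p,f}, then there exists ε > 0 such that for all t ∈ (0, ε), the evaluation (L¹_f p)(x(t)) < 0. -/

import Mathlib

/-!
Along a trajectory, `d/dt q(x(t)) = (L_f q)(x(t))` for every polynomial `q`: `L_f` is a
derivation with `L_f Xᵢ = fᵢ`, so this is the chain rule. Hence `gⱼ(t) = (L^j_f p)(x(t))`
satisfies `gⱼ' = gⱼ₊₁`. Since `gₖ(0) < 0`, `gₖ` is negative just to the right of `0`, and a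
function vanishing at `0` whose derivative is negative on `(0, ε)` is itself negative there;
descending from `k` to `1` gives the claim.
-/

open MvPolynomial Set Filter Topology

noncomputable def lieDeriv {n : ℕ} (f : Fin n → MvPolynomial (Fin n) ℝ)
    (p : MvPolynomial (Fin n) ℝ) : MvPolynomial (Fin n) ℝ :=
  ∑ i, pderiv i p * f i

section

variable {n : ℕ} (f : Fin n → MvPolynomial (Fin n) ℝ)

@[simp]
theorem lieDeriv_C (a : ℝ) : lieDeriv f (C a) = 0 := by
  simp [lieDeriv]

@[simp]
theorem lieDeriv_add (p q : MvPolynomial (Fin n) ℝ) :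
    lieDeriv f (p + q) = lieDeriv f p + lieDeriv f q := by
  simp [lieDeriv, add_mul, Finset.sum_add_distrib]

@[simp]
theorem lieDeriv_mul (p q : MvPolynomial (Fin n) ℝ) :
    lieDeriv f (p * q) = lieDeriv f p * q + p * lieDeriv f q := by
  simp only [lieDeriv, Derivation.leibniz, smul_eq_mul, add_mul, Finset.sum_add_distrib,
    Finset.sum_mul, Finset.mul_sum]
  rw [add_comm]
  congr 1 <;> exact Finset.sum_congr rfl fun _ _ => by ring

@[simp]
theorem lieDeriv_X (i : Fin n) : lieDeriv f (X i) = f i := by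
  simp [lieDeriv, pderiv_X, Pi.single_apply]

end

theorem hasDerivAt_eval_lieDeriv {n : ℕ} {f : Fin n → MvPolynomial (Fin n) ℝ}
    {x : ℝ → Fin n → ℝ} {t : ℝ}
    (hx : ∀ i, HasDerivAt (fun s => x s i) (eval (x t) (f i)) t) (q : MvPolynomial (Fin n) ℝ) :
    HasDerivAt (fun s => eval (x s) q) (eval (x t) (lieDeriv f q)) t := by
  induction q using MvPolynomial.induction_on with
  | C a => simpa using hasDerivAt_const t a
  | add p q hp hq => simpa using hp.fun_add hq
  | mul_X p i hp => simpa using hp.fun_mul (hx i)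

theorem eventually_nhdsGT_neg_of_deriv {f f' : ℝ → ℝ} {a : ℝ}
    (hf : ∀ t, HasDerivAt f (f' t) t) (ha : f a = 0) (h' : ∀ᶠ t in 𝓝[>] a, f' t < 0) :
    ∀ᶠ t in 𝓝[>] a, f t < 0 := by
  obtain ⟨ε, hε, hneg⟩ := (nhdsGT_basis a).eventually_iff.mp h'
  have hanti : StrictAntiOn f (Icc a ε) := by
    refine strictAntiOn_of_deriv_neg (convex_Icc a ε)
      (fun t _ => (hf t).continuousAt.continuousWithinAt) fun t ht => ?_
    rw [interior_Icc] at ht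
    exact (hf t).deriv ▸ hneg ht
  refine (nhdsGT_basis a).eventually_iff.mpr ⟨ε, hε, fun t ht => ?_⟩
  simpa [ha] using hanti (left_mem_Icc.mpr hε.le) (Ioo_subset_Icc_self ht) ht.1

theorem eventually_nhdsGT_neg_of_iterated_deriv {g : ℕ → ℝ → ℝ} {a : ℝ} {m k : ℕ}
    (hg : ∀ j t, HasDerivAt (g j) (g (j + 1) t) t) (hmk : m ≤ k)
    (hzero : ∀ j, m ≤ j → j < k → g j a = 0) (hk : g k a < 0) :
    ∀ᶠ t in 𝓝[>] a, g m t < 0 := by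
  induction hmk using Nat.decreasingInduction with
  | self => exact (hg k a).continuousAt.continuousWithinAt.eventually_lt_const hk
  | of_succ j hjk ih =>
    exact eventually_nhdsGT_neg_of_deriv (hg j) (hzero j le_rfl hjk)
      (ih fun i hi hik => hzero i (by omega) hik)

/-- If the initial point of a trajectory lies in the transverse set `Trans_{p,f}`,
then the first-order Lie derivative is negative along the trajectory for small
positive times. -/
theorem transverse_initial_point {n : ℕ} (f : Fin n → MvPolynomial (Fin n) ℝ)
    (p : MvPolynomial (Fin n) ℝ) (x : ℝ → Fin n → ℝ)
    (hx : ∀ (i : Fin n) (t : ℝ), HasDerivAt (fun s => x s i) (eval (x t) (f i)) t)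
    (x₀ : Fin n → ℝ) (hx0 : x 0 = x₀)
    (htrans : ∃ k, 1 ≤ k ∧
      (∀ j, 1 ≤ j → j < k → eval x₀ ((lieDeriv f)^[j] p) = 0) ∧
      eval x₀ ((lieDeriv f)^[k] p) < 0) :
    ∃ ε > (0 : ℝ), ∀ t ∈ Ioo (0 : ℝ) ε, eval (x t) (lieDeriv f p) < 0 := by
  obtain ⟨k, hk1, hzero, hneg⟩ := htrans
  subst hx0
  set g : ℕ → ℝ → ℝ := fun j s => eval (x s) ((lieDeriv f)^[j] p)
  have hg : ∀ j t, HasDerivAt (g j) (g (j + 1) t) t := fun j t => by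
    simp only [g, Function.iterate_succ_apply']
    exact hasDerivAt_eval_lieDeriv (hx · t) _
  have := eventually_nhdsGT_neg_of_iterated_deriv hg hk1 hzero hneg
  exact (nhdsGT_basis 0).eventually_iff.mp this
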